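/- For every n ≥ 3, the order superpower graph S(S_n) of the symmetric group S_n is not minimally edge connected. -/

import Mathlib

/-- The degree of a vertex: the number of its neighbours. -/
noncomputable def gDeg {V : Type*} (G : SimpleGraph V) (v : V) : ℕ :=
  (G.neighborSet v).ncard

/-- The minimum degree of a graph. -/
noncomputable def minDeg {V : Type*} (G : SimpleGraph V) : ℕ :=
  sInf (Set.range (gDeg G))

/-- The edge connectivity: the minimum size of a set of edges whose removal
disconnects the graph. -/
noncomputable def edgeConn {V : Type*} (G : SimpleGraph V) : ℕ :=
  sInf {n : ℕ | ∃ S : Set (Sym2 V), S ⊆ G.edgeSet ∧ S.ncard = n ∧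
    ¬ (G.deleteEdges S).Connected}

/-- The vertex connectivity: the minimum size of a set of vertices whose removal
disconnects the graph or leaves a single vertex. -/
noncomputable def vertexConn {V : Type*} (G : SimpleGraph V) : ℕ :=
  sInf {n : ℕ | ∃ S : Set V, S.ncard = n ∧ Sᶜ.Nonempty ∧
    (¬ (G.induce Sᶜ).Preconnected ∨ Sᶜ.ncard = 1)}

/-- A graph is minimally edge connected if deleting any edge decreases the
edge connectivity by one. -/
def MinEdgeConnected {V : Type*} (G : SimpleGraph V) : Prop :=
  ∀ e ∈ G.edgeSet, edgeConn (G.deleteEdges {e}) = edgeConn G - 1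

/-- A graph is minimally connected if deleting any edge decreases the
vertex connectivity by one. -/
def MinConnected {V : Type*} (G : SimpleGraph V) : Prop :=
  ∀ e ∈ G.edgeSet, vertexConn (G.deleteEdges {e}) = vertexConn G - 1

/-- The power graph of a group: distinct `x, y` are adjacent iff one is a
natural power of the other. -/
def powerGraph (G : Type*) [Group G] : SimpleGraph G :=
  SimpleGraph.fromRel (fun x y => ∃ m : ℕ, y = x ^ m)

/-- The enhanced power graph of a group: distinct `x, y` are adjacent iff they
lie in a common cyclic subgroup. -/
def enhancedPowerGraph (G : Type*) [Group G] : SimpleGraph G :=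
  SimpleGraph.fromRel
    (fun x y => ∃ z : G, x ∈ Subgroup.zpowers z ∧ y ∈ Subgroup.zpowers z)

/-- The order superpower graph of a group: distinct `x, y` are adjacent iff the
order of one divides the order of the other. -/
def superpowerGraph (G : Type*) [Group G] : SimpleGraph G :=
  SimpleGraph.fromRel (fun x y => orderOf x ∣ orderOf y)

/-!
Two transpositions `u ≠ v` of `S_n` have the same order, so in the order superpower graph they are
adjacent and have the same neighbours. If the graph were minimally edge connected, the edge `uv`
would lie in a minimum edge cut `S`. A minimum cut separates the ends of each of its edges, so
every neighbour of `u` accounts for its own edge of `S`, and `deg u ≤ |S| = κ' ≤ deg w` for all `w`.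
This fails for a 3-cycle `w` when `n = 3, 4`: its order-comparable elements solve `x³ = 1`, and
there are more solutions of `x⁴ = 1`, all comparable to `u`. It fails for a 4-cycle `w` when
`n ≥ 5`: everything comparable to 4 is comparable to 2, but an element of order 6 is comparable to 2
and not to 4.
-/

open SimpleGraph Set Equiv

section EdgeCuts

variable {V : Type*} {G : SimpleGraph V}

structure IsMinEdgeCut (G : SimpleGraph V) (S : Set (Sym2 V)) : Prop where
  subset_edgeSet : S ⊆ G.edgeSet
  not_connected : ¬ (G.deleteEdges S).Connected
  ncard_eq : S.ncard = edgeConn G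

lemma edgeConn_le_ncard {S : Set (Sym2 V)} (hS : S ⊆ G.edgeSet)
    (hdisc : ¬ (G.deleteEdges S).Connected) : edgeConn G ≤ S.ncard :=
  Nat.sInf_le ⟨S, hS, rfl, hdisc⟩

lemma gDeg_eq_ncard_incidenceSet (v : V) : gDeg G v = (G.incidenceSet v).ncard := by
  classical
  rw [gDeg, ← Nat.card_coe_set_eq, ← Nat.card_coe_set_eq,
    Nat.card_congr (G.incidenceSetEquivNeighborSet v)]

lemma not_connected_deleteEdges_incidenceSet [Nontrivial V] (v : V) :
    ¬ (G.deleteEdges (G.incidenceSet v)).Connected := by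
  obtain ⟨w, hw⟩ := exists_ne v
  intro hconn
  obtain ⟨p⟩ := hconn.preconnected v w
  cases p with
  | nil => exact hw rfl
  | cons hadj _ =>
    rw [deleteEdges_adj] at hadj
    exact hadj.2 ⟨hadj.1, Sym2.mem_mk_left _ _⟩

lemma edgeConn_le_gDeg [Nontrivial V] (v : V) : edgeConn G ≤ gDeg G v :=
  gDeg_eq_ncard_incidenceSet (G := G) v ▸
    edgeConn_le_ncard (fun _ he => he.1) (not_connected_deleteEdges_incidenceSet v)

lemma exists_isMinEdgeCut [Nontrivial V] (G : SimpleGraph V) : ∃ S, IsMinEdgeCut G S := by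
  obtain ⟨S, hS, hcard, hdisc⟩ := Nat.sInf_mem (s := {n : ℕ | ∃ S : Set (Sym2 V),
      S ⊆ G.edgeSet ∧ S.ncard = n ∧ ¬ (G.deleteEdges S).Connected})
    ⟨_, _, fun _ he => he.1, rfl, not_connected_deleteEdges_incidenceSet (Classical.arbitrary V)⟩
  exact ⟨S, hS, hdisc, hcard⟩

lemma SimpleGraph.Connected.one_le_edgeConn [Finite V] [Nontrivial V] (hG : G.Connected) :
    1 ≤ edgeConn G := by
  obtain ⟨S, -, hdisc, hcard⟩ := exists_isMinEdgeCut G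
  rw [Nat.one_le_iff_ne_zero, ← hcard, Ne, Set.ncard_eq_zero]
  rintro rfl
  exact hdisc (by rwa [deleteEdges_empty])

lemma reachable_deleteEdges_of_reachable_sdiff_singleton {S : Set (Sym2 V)} {a b x y : V}
    (hab : (G.deleteEdges S).Reachable a b) (hxy : (G.deleteEdges (S \ {s(a, b)})).Reachable x y) :
    (G.deleteEdges S).Reachable x y := by
  rw [reachable_iff_reflTransGen] at hxy ⊢
  refine Relation.reflTransGen_closed (fun c d hcd => ?_) x y hxy
  rw [← reachable_iff_reflTransGen]
  by_cases hcdS : s(c, d) ∈ S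
  · have : s(c, d) = s(a, b) := by
      by_contra hne
      exact (deleteEdges_adj.1 hcd).2 ⟨hcdS, hne⟩
    rcases Sym2.eq_iff.1 this with ⟨rfl, rfl⟩ | ⟨rfl, rfl⟩
    · exact hab
    · exact hab.symm
  · exact (deleteEdges_adj.2 ⟨(deleteEdges_adj.1 hcd).1, hcdS⟩).reachable

lemma IsMinEdgeCut.not_reachable_of_mem [Finite V] {S : Set (Sym2 V)} (hS : IsMinEdgeCut G S)
    {a b : V} (hab : s(a, b) ∈ S) : ¬ (G.deleteEdges S).Reachable a b := by
  intro hreach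
  have : Nonempty V := ⟨a⟩
  have hdisc : ¬ (G.deleteEdges (S \ {s(a, b)})).Connected := fun hconn =>
    hS.not_connected ⟨fun x y => reachable_deleteEdges_of_reachable_sdiff_singleton hreach
      (hconn.preconnected x y)⟩
  have hle := edgeConn_le_ncard (sdiff_subset.trans hS.subset_edgeSet) hdisc
  rw [← hS.ncard_eq, ncard_sdiff_singleton_of_mem hab] at hle
  have := (ncard_pos).2 ⟨_, hab⟩
  omega

lemma IsMinEdgeCut.gDeg_le_ncard [Finite V] {S : Set (Sym2 V)} (hS : IsMinEdgeCut G S)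
    {u v : V} (huvS : s(u, v) ∈ S) (htwin : ∀ x, G.Adj u x → x ≠ v → G.Adj v x) :
    gDeg G u ≤ S.ncard := by
  classical
  set R := (G.deleteEdges S).Reachable u
  have hcross : ∀ a b, G.Adj a b → R a → ¬ R b → s(a, b) ∈ S := fun a b hab ha hb => by
    by_contra h
    exact hb (ha.trans (deleteEdges_adj.2 ⟨hab, h⟩).reachable)
  have hv : ¬ R v := hS.not_reachable_of_mem huvS
  -- Charge a neighbour `x` of `u` to the cut edge `xv` if `x` stays in the component of `u`
  -- in `G - S` (which does not contain `v`), and to `ux` otherwise.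
  let ψ : V → Sym2 V := fun x => if R x then s(x, v) else s(u, x)
  refine ncard_le_ncard_of_injOn ψ (fun x hx => ?_) (fun x hx y hy hxy => ?_)
  · by_cases hRx : R x
    · simp only [ψ, if_pos hRx]
      exact hcross x v (htwin x hx fun h => hv (h ▸ hRx)).symm hRx hv
    · simp only [ψ, if_neg hRx]
      exact hcross u x hx .rfl hRx
  · have hxu : x ≠ u := (G.ne_of_adj hx).symm
    have hyu : y ≠ u := (G.ne_of_adj hy).symm
    by_cases hRx : R x <;> by_cases hRy : R y <;>
      simp only [ψ, hRx, hRy, if_true, if_false, Sym2.eq_iff] at hxy <;> grind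

lemma MinEdgeConnected.exists_isMinEdgeCut_mem [Finite V] [Nontrivial V]
    (hmin : MinEdgeConnected G) (hG : G.Connected) {e : Sym2 V} (he : e ∈ G.edgeSet) :
    ∃ S, IsMinEdgeCut G S ∧ e ∈ S := by
  obtain ⟨S', hS'sub, hS'disc, hS'card⟩ := exists_isMinEdgeCut (G.deleteEdges {e})
  rw [hmin e he] at hS'card
  have hsub : insert e S' ⊆ G.edgeSet :=
    insert_subset he (hS'sub.trans (edgeSet_deleteEdges _ ▸ sdiff_subset))
  have hdisc : ¬ (G.deleteEdges (insert e S')).Connected := by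
    rwa [insert_eq, ← deleteEdges_deleteEdges]
  refine ⟨insert e S', ⟨hsub, hdisc, le_antisymm ?_ (edgeConn_le_ncard hsub hdisc)⟩,
    mem_insert _ _⟩
  have := hG.one_le_edgeConn
  have := ncard_insert_le e S'
  omega

lemma MinEdgeConnected.gDeg_le_of_adj_of_twin [Finite V] (hmin : MinEdgeConnected G)
    (hG : G.Connected) {u v : V} (huv : G.Adj u v)
    (htwin : ∀ x, G.Adj u x → x ≠ v → G.Adj v x) (w : V) : gDeg G u ≤ gDeg G w := by
  have := nontrivial_of_ne u v huv.ne
  obtain ⟨S, hS, huvS⟩ := hmin.exists_isMinEdgeCut_mem hG (G.mem_edgeSet.2 huv)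
  calc gDeg G u ≤ S.ncard := hS.gDeg_le_ncard huvS htwin
    _ = edgeConn G := hS.ncard_eq
    _ ≤ gDeg G w := edgeConn_le_gDeg w

end EdgeCuts

section SuperpowerGraph

variable {Γ : Type*} [Group Γ]

lemma superpowerGraph_adj {x y : Γ} :
    (superpowerGraph Γ).Adj x y ↔ x ≠ y ∧ (orderOf x ∣ orderOf y ∨ orderOf y ∣ orderOf x) :=
  fromRel_adj _ _ _

lemma superpowerGraph_connected : (superpowerGraph Γ).Connected :=
  Connected.of_isUniversal (v := 1) fun _ hx => superpowerGraph_adj.2 ⟨hx, .inl (by simp)⟩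

variable (Γ) in
def orderComparableSet (k : ℕ) : Set Γ := {y | orderOf y ∣ k ∨ k ∣ orderOf y}

lemma insert_neighborSet_superpowerGraph (x : Γ) :
    insert x ((superpowerGraph Γ).neighborSet x) = orderComparableSet Γ (orderOf x) := by
  ext y
  by_cases hyx : y = x
  · simp [hyx, orderComparableSet]
  · simp [hyx, Ne.symm hyx, orderComparableSet, superpowerGraph_adj, or_comm]

lemma gDeg_superpowerGraph_add_one [Finite Γ] (x : Γ) :
    gDeg (superpowerGraph Γ) x + 1 = (orderComparableSet Γ (orderOf x)).ncard := by
  rw [← insert_neighborSet_superpowerGraph, ncard_insert_of_notMem (notMem_neighborSet_self _),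
    gDeg]

theorem not_minEdgeConnected_superpowerGraph [Finite Γ] {u v w : Γ} (huv : u ≠ v)
    (hord : orderOf u = orderOf v)
    (hlt : (orderComparableSet Γ (orderOf w)).ncard < (orderComparableSet Γ (orderOf u)).ncard) :
    ¬ MinEdgeConnected (superpowerGraph Γ) := by
  intro hmin
  have hadj : (superpowerGraph Γ).Adj u v := superpowerGraph_adj.2 ⟨huv, .inl hord.dvd⟩
  have htwin (x : Γ) (hx : (superpowerGraph Γ).Adj u x) (hxv : x ≠ v) :
      (superpowerGraph Γ).Adj v x :=
    superpowerGraph_adj.2 ⟨hxv.symm, hord ▸ (superpowerGraph_adj.1 hx).2⟩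
  have := hmin.gDeg_le_of_adj_of_twin superpowerGraph_connected hadj htwin w
  rw [← gDeg_superpowerGraph_add_one, ← gDeg_superpowerGraph_add_one] at hlt
  omega

lemma dvd_two_or_two_dvd_of_dvd_four {d : ℕ} (h : d ∣ 4) : d ∣ 2 ∨ 2 ∣ d := by
  obtain ⟨i, hi, rfl⟩ := (Nat.dvd_prime_pow (p := 2) (m := 2) Nat.prime_two).1 h
  interval_cases i <;> simp

lemma orderComparableSet_four_ssubset_two {z : Γ} (hz : orderOf z = 6) :
    orderComparableSet Γ 4 ⊂ orderComparableSet Γ 2 := by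
  refine (ssubset_iff_of_subset ?_).2 ⟨z, ?_, ?_⟩
  · rintro y (h | h)
    · exact dvd_two_or_two_dvd_of_dvd_four h
    · exact .inr (dvd_trans (by norm_num) h)
  · simp [orderComparableSet, hz]
  · simp [orderComparableSet, hz]

lemma ncard_orderComparableSet_three_lt_two [Fintype Γ] [DecidableEq Γ]
    (hpow : ∀ x : Γ, x ^ 3 = 1 ∨ x ^ 4 = 1)
    (hcard : (Finset.univ.filter fun x : Γ => x ^ 3 = 1).card <
      (Finset.univ.filter fun x : Γ => x ^ 4 = 1).card) :
    (orderComparableSet Γ 3).ncard < (orderComparableSet Γ 2).ncard := by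
  have hsub3 : orderComparableSet Γ 3 ⊆ {x | x ^ 3 = 1} := by
    rintro y (h | h)
    · exact orderOf_dvd_iff_pow_eq_one.1 h
    · refine (hpow y).resolve_right fun h4 => ?_
      exact absurd (h.trans (orderOf_dvd_of_pow_eq_one h4)) (by norm_num)
  have hsub4 : {x : Γ | x ^ 4 = 1} ⊆ orderComparableSet Γ 2 := fun y hy =>
    dvd_two_or_two_dvd_of_dvd_four (orderOf_dvd_of_pow_eq_one hy)
  calc (orderComparableSet Γ 3).ncard ≤ {x : Γ | x ^ 3 = 1}.ncard := ncard_le_ncard hsub3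
    _ < {x : Γ | x ^ 4 = 1}.ncard := by
      simpa only [ncard_eq_toFinset_card', toFinset_ofPred] using hcard
    _ ≤ (orderComparableSet Γ 2).ncard := ncard_le_ncard hsub4

end SuperpowerGraph

set_option maxRecDepth 10000 in
/-- For `n ≥ 3`, the order superpower graph of the symmetric group
`S_n` is not minimally edge connected. -/
theorem stmt_11 (n : ℕ) (hn : 3 ≤ n) :
    ¬ MinEdgeConnected (superpowerGraph (Equiv.Perm (Fin n))) := by
  have hswap {m : ℕ} {i j : Fin m} (hij : i ≠ j) : orderOf (swap i j) = 2 :=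
    Perm.IsSwap.orderOf ⟨i, j, hij, rfl⟩
  obtain h4 | h5 : n ≤ 4 ∨ 5 ≤ n := by omega
  · interval_cases n <;>
      refine not_minEdgeConnected_superpowerGraph (u := swap 0 1) (v := swap 0 2)
        (w := swap 0 1 * swap 1 2) (by decide)
        (by rw [hswap (by decide), hswap (by decide)]) ?_ <;>
      rw [hswap (by decide), (orderOf_eq_iff three_pos).2 ⟨by decide, by decide⟩] <;>
      exact ncard_orderComparableSet_three_lt_two (by decide) (by decide)
  · let φ := Perm.viaEmbeddingHom (Fin.castLEEmb h5)
    have hφ : Function.Injective φ := Perm.viaEmbeddingHom_injective _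
    have hord (x : Perm (Fin 5)) : orderOf (φ x) = orderOf x := orderOf_injective φ hφ x
    have hw : orderOf (swap 0 1 * swap 1 2 * swap 2 3 : Perm (Fin 5)) = 4 :=
      (orderOf_eq_iff four_pos).2 ⟨by decide, by decide⟩
    have hz : orderOf (swap 0 1 * swap 2 3 * swap 3 4 : Perm (Fin 5)) = 6 :=
      (orderOf_eq_iff (by norm_num)).2 ⟨by decide, by decide⟩
    refine not_minEdgeConnected_superpowerGraph (u := φ (swap 0 1)) (v := φ (swap 0 2))
      (w := φ (swap 0 1 * swap 1 2 * swap 2 3)) (hφ.ne (by decide))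
      (by rw [hord, hord, hswap (by decide), hswap (by decide)]) ?_
    rw [hord, hord, hswap (by decide), hw]
    exact ncard_lt_ncard <| orderComparableSet_four_ssubset_two
      (z := φ (swap 0 1 * swap 2 3 * swap 3 4)) (by rw [hord, hz])
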